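/- Let ρ₁, ρ₂ be unitary representations of R^d on a Hilbert space H satisfying the covariance relation ρ₁(x) ρ₂(y) ρ₁(x)^{-1} = e^{iα x·y} ρ₂(y) for all x, y ∈ R^d, with α ≠ 0. Define on L²(R^d) the canonical pair (ρ̃₁(x)f)(ξ) = f(ξ+x) and (ρ̃₂(y)f)(ξ) = e^{iα y·ξ} f(ξ). Then ρ̃₁ and ρ̃₂ satisfy the same covariance relation and act jointly irreducibly on L²(R^d): every closed subspace invariant under all ρ̃₁(x) and ρ̃₂(y) is {0} or L²(R^d). -/

import Mathlib

open scoped BigOperators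
open MeasureTheory

/-- The canonical translation representation `(ρ̃₁(x) f)(ξ) = f(ξ + x)` of `ℝ^d`. -/
def rhoTrans (d : ℕ) (x : Fin d → ℝ) (f : (Fin d → ℝ) → ℂ) : (Fin d → ℝ) → ℂ :=
  fun ξ => f (ξ + x)

/-- The canonical modulation representation `(ρ̃₂(y) f)(ξ) = e^{iα y·ξ} f(ξ)` of `ℝ^d`. -/
noncomputable def rhoMod (d : ℕ) (α : ℝ) (y : Fin d → ℝ) (f : (Fin d → ℝ) → ℂ) :
    (Fin d → ℝ) → ℂ :=
  fun ξ => Complex.exp (Complex.I * ((α * ∑ j, y j * ξ j : ℝ) : ℂ)) * f ξ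

/-!
If `f ≠ 0` lies in a closed invariant subspace `S` and `g ⊥ S`, then for every translation `x`
all Fourier coefficients `⟨ρ̃₂(y) ρ̃₁(x) f, g⟩` of the integrable function `conj f(· + x) · g`
vanish, so `conj f(ξ + x) g(ξ) = 0` for almost every `ξ`. Integrating over `x`, the supports of
`f` and `g` then satisfy `|{f ≠ 0}| · |{g ≠ 0}| = 0`, hence `g = 0` and `Sᗮ = 0`.
-/

open Complex
open scoped FourierTransform ComplexConjugate

section FourierUniqueness

variable {E : Type*} [NormedAddCommGroup E] [NormedSpace ℂ E] [CompleteSpace E]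

/-- Pairing against smooth bump functions `ψ = 𝓕 (𝓕⁻ ψ)` and moving `𝓕` onto `F`. -/
theorem ae_eq_zero_of_fourier_eq_zero {V : Type*} [NormedAddCommGroup V] [InnerProductSpace ℝ V]
    [FiniteDimensional ℝ V] [MeasurableSpace V] [BorelSpace V] {F : V → E} (hF : Integrable F)
    (hFF : 𝓕 F = 0) : F =ᵐ[volume] 0 := by
  refine ae_eq_zero_of_integral_contDiff_smul_eq_zero hF.locallyIntegrable fun ψ hψ hψc => ?_
  let φ : SchwartzMap V ℂ :=
    (hψc.comp_left (g := ofRealCLM) rfl).toSchwartzMap (by fun_prop)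
  calc ∫ x, ψ x • F x = ∫ x, 𝓕 (⇑(𝓕⁻ φ : SchwartzMap V ℂ)) x • F x := by
        rw [← SchwartzMap.fourier_coe, FourierInvPair.fourier_fourierInv_eq]
        simp [φ]
    _ = ∫ x, (𝓕⁻ φ) x • 𝓕 F x := by
        simpa using! VectorFourier.integral_fourierIntegral_smul_eq_flip (L := innerₗ V)
          Real.continuous_fourierChar continuous_inner ((𝓕⁻ φ).integrable (μ := volume)) hF
    _ = 0 := by simp [hFF]

theorem ae_eq_zero_of_integral_exp_smul_eq_zero {ι : Type*} [Fintype ι] {F : (ι → ℝ) → E}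
    (hF : Integrable F) (h : ∀ w : ι → ℝ, ∫ ξ, cexp (I * ↑(∑ i, w i * ξ i)) • F ξ = 0) :
    F =ᵐ[volume] 0 := by
  have hFF : 𝓕 (fun v : EuclideanSpace ℝ ι => F v.ofLp) = 0 := by
    ext w
    rw [Pi.zero_apply, Real.fourier_eq, ← h (-(2 * Real.pi) • w.ofLp),
      ← (EuclideanSpace.volume_preserving_symm_measurableEquiv_toLp ι).integral_comp']
    congr 1 with v
    rw [Circle.smul_def, Real.fourierChar_apply, PiLp.inner_apply]
    congr 2
    push_cast
    simp only [Finset.mul_sum, ← Finset.sum_neg_distrib, Finset.sum_mul]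
    refine Finset.sum_congr rfl fun i _ => ?_
    simp only [RCLike.inner_apply, conj_trivial, Pi.smul_apply, smul_eq_mul,
      MeasurableEquiv.toLp_symm_apply]
    push_cast
    ring
  exact (PiLp.volume_preserving_toLp ι).quasiMeasurePreserving.ae_eq_comp
    (ae_eq_zero_of_fourier_eq_zero
      ((PiLp.volume_preserving_ofLp ι).integrable_comp_of_integrable hF) hFF)

end FourierUniqueness

section Translates

variable {G : Type*} [MeasurableSpace G] [AddGroup G] [MeasurableAdd₂ G] {μ : Measure G}
  [SFinite μ] [μ.IsAddLeftInvariant]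

/-- Fubini: `∫ μ ((· + x) ⁻¹' A ∩ B) dx = μ A * μ B`. -/
theorem measure_eq_zero_or_of_forall_measure_preimage_add_inter_eq_zero {A B : Set G}
    (hA : MeasurableSet A) (h : ∀ x, μ ((· + x) ⁻¹' A ∩ B) = 0) : μ A = 0 ∨ μ B = 0 := by
  have hAB : ∫⁻ _ in B, μ A ∂μ = 0 := calc
    ∫⁻ _ in B, μ A ∂μ = ∫⁻ ξ in B, ∫⁻ x, A.indicator 1 (ξ + x) ∂μ ∂μ := by
      refine lintegral_congr fun ξ => ?_
      rw [lintegral_add_left_eq_self (A.indicator 1), lintegral_indicator_one hA]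
    _ = ∫⁻ x, μ ((· + x) ⁻¹' A ∩ B) ∂μ := by
      rw [lintegral_lintegral_swap (f := fun ξ x => A.indicator 1 (ξ + x))
        ((measurable_one.indicator hA).comp measurable_add).aemeasurable]
      refine lintegral_congr fun x => ?_
      rw [← Measure.restrict_apply (measurable_add_const x hA),
        ← lintegral_indicator_one (measurable_add_const x hA)]
      rfl
    _ = 0 := by simp [h]
  simpa [mul_comm, or_comm] using hAB

theorem ae_eq_zero_or_ae_eq_zero_of_forall_ae_add {M : Type*} [Zero M] [MeasurableSpace M]
    [MeasurableSingletonClass M] {f g : G → M} (hf : Measurable f)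
    (h : ∀ x, ∀ᵐ ξ ∂μ, f (ξ + x) = 0 ∨ g ξ = 0) : f =ᵐ[μ] 0 ∨ g =ᵐ[μ] 0 := by
  simp only [Filter.EventuallyEq, ae_iff, Pi.zero_apply]
  refine measure_eq_zero_or_of_forall_measure_preimage_add_inter_eq_zero
    (hf (measurableSet_singleton 0)).compl fun x => ?_
  simpa [ae_iff, not_or, Set.ofPred_and] using h x

end Translates

section CanonicalPair

variable {d : ℕ} {α : ℝ}

theorem rhoTrans_rhoMod_rhoTrans_neg (f : (Fin d → ℝ) → ℂ) (x y : Fin d → ℝ) :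
    rhoTrans d x (rhoMod d α y (rhoTrans d (-x) f))
      = fun ξ => cexp (I * ((α * ∑ j, x j * y j : ℝ) : ℂ)) * rhoMod d α y f ξ := by
  funext ξ
  have hsum : ∑ j, y j * (ξ + x) j = ∑ j, x j * y j + ∑ j, y j * ξ j := by
    simp only [Pi.add_apply, ← Finset.sum_add_distrib]
    exact Finset.sum_congr rfl fun j _ => by ring
  simp only [rhoTrans, rhoMod, add_neg_cancel_right, ← mul_assoc, ← exp_add, hsum]
  push_cast
  ring_nf

theorem norm_rhoMod (y : Fin d → ℝ) (f : (Fin d → ℝ) → ℂ) (ξ : Fin d → ℝ) :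
    ‖rhoMod d α y f ξ‖ = ‖f ξ‖ := by
  rw [rhoMod, norm_mul, norm_exp_I_mul_ofReal, one_mul]

theorem MeasureTheory.MemLp.rhoTrans {p : ENNReal} {f : (Fin d → ℝ) → ℂ} (hf : MemLp f p)
    (x : Fin d → ℝ) :
    MemLp (rhoTrans d x f) p :=
  hf.comp_measurePreserving (measurePreserving_add_right volume x)

theorem MeasureTheory.MemLp.rhoMod {p : ENNReal} {f : (Fin d → ℝ) → ℂ} (hf : MemLp f p)
    (y : Fin d → ℝ) :
    MemLp (rhoMod d α y f) p :=
  hf.of_le ((Continuous.aestronglyMeasurable (by fun_prop)).mul hf.1)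
    (ae_of_all _ fun ξ => (norm_rhoMod y f ξ).le)

theorem integral_conj_rhoMod_rhoTrans_mul_eq_zero
    {S : Submodule ℂ (Lp ℂ 2 (volume : Measure (Fin d → ℝ)))}
    (hTrans : ∀ f ∈ S, ∀ x (g : Lp ℂ 2 (volume : Measure (Fin d → ℝ))),
      (⇑g =ᵐ[volume] rhoTrans d x ⇑f) → g ∈ S)
    (hMod : ∀ f ∈ S, ∀ y (g : Lp ℂ 2 (volume : Measure (Fin d → ℝ))),
      (⇑g =ᵐ[volume] rhoMod d α y ⇑f) → g ∈ S)
    {f g : Lp ℂ 2 (volume : Measure (Fin d → ℝ))} (hf : f ∈ S) (hg : g ∈ Sᗮ)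
    (x y : Fin d → ℝ) :
    ∫ ξ, conj (rhoMod d α y (rhoTrans d x f) ξ) * g ξ = 0 := by
  have hu := (Lp.memLp f).rhoTrans x
  have hv := (Lp.memLp (hu.toLp _)).rhoMod (α := α) y
  have hvS : hv.toLp _ ∈ S :=
    hMod _ (hTrans f hf x _ hu.coeFn_toLp) y _ hv.coeFn_toLp
  have hv_ae : ⇑(hv.toLp _) =ᵐ[volume] rhoMod d α y (rhoTrans d x f) := by
    filter_upwards [hv.coeFn_toLp, hu.coeFn_toLp] with ξ hvξ huξ
    rw [hvξ, rhoMod, huξ, rhoMod]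
  rw [← Submodule.inner_right_of_mem_orthogonal hvS hg, L2.inner_def]
  refine integral_congr_ae ?_
  filter_upwards [hv_ae] with ξ hξ
  rw [RCLike.inner_apply, hξ, mul_comm]

theorem ae_rhoTrans_eq_zero_or_eq_zero (hα : α ≠ 0) {f g : (Fin d → ℝ) → ℂ}
    (hf : MemLp f 2) (hg : MemLp g 2)
    (h : ∀ x y, ∫ ξ, conj (rhoMod d α y (rhoTrans d x f) ξ) * g ξ = 0) (x : Fin d → ℝ) :
    ∀ᵐ ξ, f (ξ + x) = 0 ∨ g ξ = 0 := by
  have hF : Integrable (fun ξ => conj (f (ξ + x)) * g ξ) :=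
    ((hf.rhoTrans x).star).integrable_mul hg
  have hzero := ae_eq_zero_of_integral_exp_smul_eq_zero hF fun w => by
    rw [← h x (-α⁻¹ • w)]
    refine integral_congr_ae (ae_of_all _ fun ξ => ?_)
    have hphase : α * ∑ j, (-α⁻¹ • w) j * ξ j = -∑ i, w i * ξ i := by
      simp only [Finset.mul_sum, ← Finset.sum_neg_distrib, Pi.smul_apply, smul_eq_mul]
      exact Finset.sum_congr rfl fun j _ => by field_simp
    simp only [rhoMod, rhoTrans, hphase, map_mul, ← exp_conj, conj_I, conj_ofReal, smul_eq_mul]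
    push_cast
    ring_nf
  filter_upwards [hzero] with ξ hξ
  simpa using hξ

end CanonicalPair

/-- (Stone–von Neumann, canonical pair.)  The canonical pair `ρ̃₁, ρ̃₂` on `L²(ℝ^d)` defined by
`(ρ̃₁(x)f)(ξ) = f(ξ+x)` and `(ρ̃₂(y)f)(ξ) = e^{iα y·ξ} f(ξ)` satisfies the covariance relation
`ρ̃₁(x) ρ̃₂(y) ρ̃₁(x)⁻¹ = e^{iα x·y} ρ̃₂(y)` and acts jointly irreducibly on `L²(ℝ^d)`: every
closed subspace invariant under all `ρ̃₁(x)` and `ρ̃₂(y)` is `{0}` or `L²(ℝ^d)`. -/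
theorem stone_von_neumann_canonical_pair (d : ℕ) (α : ℝ) (hα : α ≠ 0) :
    (∀ (f : (Fin d → ℝ) → ℂ) (x y : Fin d → ℝ),
      rhoTrans d x (rhoMod d α y (rhoTrans d (-x) f))
        = fun ξ => Complex.exp (Complex.I * ((α * ∑ j, x j * y j : ℝ) : ℂ))
            * rhoMod d α y f ξ) ∧
    (∀ S : Submodule ℂ (Lp ℂ 2 (volume : Measure (Fin d → ℝ))),
      IsClosed (S : Set (Lp ℂ 2 (volume : Measure (Fin d → ℝ)))) →
      (∀ f : Lp ℂ 2 (volume : Measure (Fin d → ℝ)), f ∈ S →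
        ∀ (x : Fin d → ℝ) (g : Lp ℂ 2 (volume : Measure (Fin d → ℝ))),
          (⇑g =ᵐ[volume] rhoTrans d x ⇑f) → g ∈ S) →
      (∀ f : Lp ℂ 2 (volume : Measure (Fin d → ℝ)), f ∈ S →
        ∀ (y : Fin d → ℝ) (g : Lp ℂ 2 (volume : Measure (Fin d → ℝ))),
          (⇑g =ᵐ[volume] rhoMod d α y ⇑f) → g ∈ S) →
      S = ⊥ ∨ S = ⊤) := by
  refine ⟨rhoTrans_rhoMod_rhoTrans_neg, fun S hS hTrans hMod => ?_⟩
  refine or_iff_not_imp_left.2 fun hS0 => ?_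
  obtain ⟨f, hfS, hf0⟩ := Submodule.exists_mem_ne_zero_of_ne_bot hS0
  have : CompleteSpace S := hS.completeSpace_coe
  rw [← Submodule.orthogonal_eq_bot_iff, Submodule.eq_bot_iff]
  intro g hg
  have hslice := ae_rhoTrans_eq_zero_or_eq_zero hα (Lp.memLp f) (Lp.memLp g)
    (integral_conj_rhoMod_rhoTrans_mul_eq_zero hTrans hMod hfS hg)
  rcases ae_eq_zero_or_ae_eq_zero_of_forall_ae_add (Lp.stronglyMeasurable f).measurable hslice
    with hf_ae | hg_ae
  · exact absurd (Lp.eq_zero_iff_ae_eq_zero.2 hf_ae) hf0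
  · exact Lp.eq_zero_iff_ae_eq_zero.2 hg_ae
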